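/- arXiv:math/0405199 — 4 statements merged into one kernel-verified Lean document; each statement's English description precedes it below -/
import Mathlib

section
/- Let r : Z → Set A be an upper semicontinuous set-valued retraction (r(z) = {z} for z ∈ A) with all values r(z) finite and nonempty, where A is a subspace of the topological space Z. If μ* is a locally finite family of open subsets of A, then the family μ = {r^♯(T) : T ∈ μ*} is locally finite in Z, where r^♯(T) = {z ∈ Z : r z ⊆ T}. -/
/-- for a finite-valued u.s.c. retraction `r : Z → Set A`, the family
`r^♯(Tᵢ)` is locally finite in `Z` whenever `(Tᵢ)` is locally finite in `A`. -/
theorem stmt1 {Z : Type*} [TopologicalSpace Z] (A : Set Z)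
    (r : Z → Set A)
    (husc : ∀ T : Set A, IsOpen T → IsOpen {z : Z | r z ⊆ T})
    (hretr : ∀ a : A, r a = {a})
    (hfin : ∀ z : Z, (r z).Finite)
    (hne : ∀ z : Z, (r z).Nonempty)
    {ι : Type*} (T : ι → Set A)
    (hopen : ∀ i, IsOpen (T i))
    (hlf : LocallyFinite T) :
    LocallyFinite (fun i => {z : Z | r z ⊆ T i}) := by
  intro z
  choose U hU hUfin using hlf
  set V : Set A := ⋃ a ∈ r z, interior (U a) with hVdef
  have hVopen : IsOpen V := isOpen_biUnion fun a _ => isOpen_interior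
  refine ⟨{w : Z | r w ⊆ V}, (husc V hVopen).mem_nhds ?_, ?_⟩
  · intro a ha
    exact Set.mem_biUnion ha (mem_interior_iff_mem_nhds.2 (hU a))
  · refine ((hfin z).biUnion fun a _ => hUfin a).subset ?_
    rintro i ⟨w, hwT, hwV⟩
    obtain ⟨b, hb⟩ := hne w
    obtain ⟨a, ha, hba⟩ := Set.mem_iUnion₂.1 (hwV hb)
    exact Set.mem_biUnion ha ⟨b, hwT hb, interior_subset hba⟩
end

section
/- Let f : Y → E be a continuous closed surjection between topological spaces, X ⊆ E a subset, and g : W → X a continuous map defined on W = f⁻¹(G) for some open set G ⊆ E containing X, such that g agrees with f on f⁻¹(X) (i.e. g(y) = f(y) for all y ∈ f⁻¹(X)). Then for every set O that is open in the subspace X, the set O* = G \ f(g⁻¹(X \ O)) is open in G and satisfies O* ∩ X = O and g(f⁻¹(O*)) ⊆ O. -/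
/-- for a continuous closed surjection `f : Y → E`, `X ⊆ E`, `G ⊇ X` open,
`W = f⁻¹(G)` and a continuous `g : W → X` agreeing with `f` on `f⁻¹(X)`, the set
`O* = G \ f(g⁻¹(X \ O))` is open, satisfies `O* ∩ X = O` and `g(f⁻¹(O*)) ⊆ O`
for every relatively open `O ⊆ X`. -/
theorem stmt3 {Y E : Type*} [TopologicalSpace Y] [TopologicalSpace E]
    (f : Y → E) (hfc : Continuous f) (hfcl : IsClosedMap f) (hfs : Function.Surjective f)
    (X G : Set E) (hG : IsOpen G) (hXG : X ⊆ G)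
    (g : (f ⁻¹' G : Set Y) → E)
    (hgc : Continuous g) (hgX : ∀ w : (f ⁻¹' G : Set Y), g w ∈ X)
    (hagree : ∀ (y : Y) (hy : f y ∈ G), f y ∈ X → g ⟨y, hy⟩ = f y)
    (O : Set E) (hOX : O ⊆ X) (hOopen : ∃ V : Set E, IsOpen V ∧ O = V ∩ X) :
    IsOpen (G \ (f '' {y : Y | ∃ hy : f y ∈ G, g ⟨y, hy⟩ ∈ X \ O})) ∧
    (G \ (f '' {y : Y | ∃ hy : f y ∈ G, g ⟨y, hy⟩ ∈ X \ O})) ∩ X = O ∧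
    (∀ (y : Y) (hy : f y ∈ G),
      f y ∈ G \ (f '' {y : Y | ∃ hy : f y ∈ G, g ⟨y, hy⟩ ∈ X \ O}) → g ⟨y, hy⟩ ∈ O) := by
  set S : Set Y := {y : Y | ∃ hy : f y ∈ G, g ⟨y, hy⟩ ∈ X \ O} with hS
  refine ⟨?_, ?_, ?_⟩
  · obtain ⟨V, hV, hOV⟩ := hOopen
    -- K = g ⁻¹ (Vᶜ) is closed in the subtype
    have hK : IsClosed (g ⁻¹' Vᶜ) := hV.isClosed_compl.preimage hgc
    obtain ⟨C, hC, hCeq⟩ := isClosed_induced_iff.mp hK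
    have key : G \ f '' S = G ∩ (f '' C)ᶜ := by
      ext e
      simp only [Set.mem_diff, Set.mem_inter_iff, Set.mem_compl_iff]
      refine and_congr_right fun heG => not_congr ?_
      constructor
      · rintro ⟨y, ⟨hy, hgy⟩, rfl⟩
        refine ⟨y, ?_, rfl⟩
        have : (⟨y, hy⟩ : (f ⁻¹' G : Set Y)) ∈ g ⁻¹' Vᶜ := by
          intro hgV
          exact hgy.2 (hOV ▸ ⟨hgV, hgy.1⟩)
        rw [← hCeq] at this
        exact this
      · rintro ⟨y, hyC, rfl⟩
        have hy : f y ∈ G := heG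
        refine ⟨y, ⟨hy, ?_⟩, rfl⟩
        have : (⟨y, hy⟩ : (f ⁻¹' G : Set Y)) ∈ g ⁻¹' Vᶜ := by
          rw [← hCeq]; exact hyC
        refine ⟨hgX _, fun hO => this ?_⟩
        rw [hOV] at hO
        exact hO.1
    rw [key]
    exact hG.inter (hfcl C hC).isOpen_compl
  · ext e
    simp only [Set.mem_inter_iff, Set.mem_diff]
    constructor
    · rintro ⟨⟨heG, hnf⟩, heX⟩
      obtain ⟨y, rfl⟩ := hfs e
      by_contra hO
      exact hnf ⟨y, ⟨heG, (hagree y heG heX) ▸ ⟨heX, hO⟩⟩, rfl⟩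
    · intro hO
      refine ⟨⟨hXG (hOX hO), ?_⟩, hOX hO⟩
      rintro ⟨y, ⟨hy, hgy⟩, hfy⟩
      have := hagree y hy (hfy ▸ hOX hO)
      rw [this, hfy] at hgy
      exact hgy.2 hO
  · intro y hy hmem
    by_contra hO
    exact hmem.2 ⟨y, ⟨hy, hgX _, hO⟩, rfl⟩
end

section
/- If f : X → Y is a perfect (continuous, closed, with compact fibers) surjection of topological spaces, X is metrizable, and Y is completely metrizable, then X is completely metrizable. -/
/-!
Equip `X` with the graph metric `max (d_X a b) (d_Y (f a) (f b))`, which induces the same topology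
since `x ↦ (x, f x)` is an embedding. A Cauchy filter for this metric has a Cauchy, hence
convergent, image in `Y`; properness of `f` lifts the limit to a cluster point of the filter
itself, and a Cauchy filter converges to each of its cluster points.
-/

open Filter Topology TopologicalSpace

theorem IsProperMap.completeSpace_of_uniformContinuous {X Y : Type*} [UniformSpace X]
    [UniformSpace Y] [CompleteSpace Y] {f : X → Y} (hf : IsProperMap f)
    (huc : UniformContinuous f) : CompleteSpace X where
  complete {F} hF := by
    have : F.NeBot := hF.1
    obtain ⟨y, hy⟩ := CompleteSpace.complete (hF.map huc)
    obtain ⟨x, -, hx⟩ := hf.clusterPt_of_mapClusterPt (ClusterPt.of_le_nhds hy)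
    exact ⟨x, le_nhds_of_cauchy_adhp hF hx⟩

theorem IsProperMap.isCompletelyMetrizableSpace {X Y : Type*} [TopologicalSpace X]
    [MetrizableSpace X] [TopologicalSpace Y] [IsCompletelyMetrizableSpace Y] {f : X → Y}
    (hf : IsProperMap f) : IsCompletelyMetrizableSpace X := by
  let := metrizableSpaceMetric X
  let := upgradeIsCompletelyMetrizable Y
  let : MetricSpace X := (isEmbedding_graph hf.continuous).comapMetricSpace _
  have hf_lip : LipschitzWith 1 f :=
    .of_dist_le_mul fun a b ↦ (le_max_right _ _).trans_eq (one_mul _).symm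
  have : CompleteSpace X := hf.completeSpace_of_uniformContinuous hf_lip.uniformContinuous
  infer_instance

theorem stmt5_general {X Y : Type*} [tX : TopologicalSpace X] [tY : TopologicalSpace Y]
    [TopologicalSpace.MetrizableSpace X]
    (f : X → Y) (hc : Continuous f) (hcl : IsClosedMap f)
    (hcpt : ∀ y : Y, IsCompact (f ⁻¹' {y}))
    (hY : ∃ mY : MetricSpace Y, mY.toUniformSpace.toTopologicalSpace = tY ∧
      @CompleteSpace Y mY.toUniformSpace) :
    ∃ mX : MetricSpace X, mX.toUniformSpace.toTopologicalSpace = tX ∧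
      @CompleteSpace X mX.toUniformSpace :=
  have : IsCompletelyMetrizableSpace Y := ⟨hY⟩
  have hf : IsProperMap f := isProperMap_iff_isClosedMap_and_compact_fibers.2 ⟨hc, hcl, hcpt⟩
  hf.isCompletelyMetrizableSpace.complete

/-- a perfect preimage of a completely metrizable space is completely metrizable
(for metrizable domains). -/
theorem stmt5 {X Y : Type*} [tX : TopologicalSpace X] [tY : TopologicalSpace Y]
    [TopologicalSpace.MetrizableSpace X]
    (f : X → Y) (hc : Continuous f) (hcl : IsClosedMap f)
    (hcpt : ∀ y : Y, IsCompact (f ⁻¹' {y})) (hsurj : Function.Surjective f)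
    (hY : ∃ mY : MetricSpace Y, mY.toUniformSpace.toTopologicalSpace = tY ∧
      @CompleteSpace Y mY.toUniformSpace) :
    ∃ mX : MetricSpace X, mX.toUniformSpace.toTopologicalSpace = tX ∧
      @CompleteSpace X mX.toUniformSpace :=
  stmt5_general (tX := tX) (tY := tY) f hc hcl hcpt hY
end

section
/- Let (X, d₁) and (Y, d₂) be metric spaces, g : X → M and f : Y → M continuous maps into a metric space M, and let P = {(x,y) ∈ X × Y : g(x) = f(y)} be the fibered product with projections p_X : P → X and p_Y : P → Y. If f is uniformly 0-dimensional with respect to d₂ (for every ε > 0, every point of f(Y) has a neighborhood U in M such that f⁻¹(U) is a union of disjoint open sets of d₂-diameter < ε), then p_X : P → X is uniformly 0-dimensional with respect to the metric d = √(d₁² + d₂²) on P. -/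
open Set

/-- `h : Z → W` is uniformly 0-dimensional with respect to the distance function `ρ` on `Z`:
for every `ε > 0` every point of the image has a neighborhood `U` whose preimage is a union
of pairwise disjoint open sets each of `ρ`-diameter `< ε`. -/
def UnifZeroDim {Z W : Type*} [TopologicalSpace Z] [TopologicalSpace W]
    (h : Z → W) (ρ : Z → Z → ℝ) : Prop :=
  ∀ ε : ℝ, 0 < ε → ∀ w ∈ Set.range h, ∃ U ∈ nhds w, ∃ 𝒰 : Set (Set Z),
    (∀ V ∈ 𝒰, IsOpen V) ∧ 𝒰.PairwiseDisjoint id ∧ ⋃₀ 𝒰 = h ⁻¹' U ∧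
    ∀ V ∈ 𝒰, ∀ a ∈ V, ∀ b ∈ V, ρ a b < ε

/-- if `f : Y → M` is uniformly 0-dimensional w.r.t. `d₂`, then the projection
`p_X` of the fibered product `P = {(x,y) : g x = f y}` to `X` is uniformly 0-dimensional
w.r.t. the metric `d = √(d₁² + d₂²)` on `P`. -/
theorem stmt15 {X Y M : Type*} [MetricSpace X] [MetricSpace Y] [MetricSpace M]
    (g : X → M) (hg : Continuous g) (f : Y → M) (hf : Continuous f)
    (hf0 : UnifZeroDim f (fun a b => dist a b)) :
    UnifZeroDim (fun p : {p : X × Y // g p.1 = f p.2} => p.1.1)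
      (fun p q => Real.sqrt (dist p.1.1 q.1.1 ^ 2 + dist p.1.2 q.1.2 ^ 2)) := by
  intro ε hε w hw
  obtain ⟨p₀, hp₀⟩ := hw
  obtain ⟨U, hU, 𝒰, hopen, hdisj, hunion, hdiam⟩ :=
    hf0 (ε/2) (by linarith) (f p₀.1.2) ⟨_, rfl⟩
  have hgw : g w = f p₀.1.2 := by rw [← hp₀]; exact p₀.2
  refine ⟨g ⁻¹' U ∩ Metric.ball w (ε/4), ?_,
    (fun V => (fun p : {p : X × Y // g p.1 = f p.2} => p.1) ⁻¹'
      (Metric.ball w (ε/4) ×ˢ V)) '' 𝒰, ?_, ?_, ?_, ?_⟩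
  · exact Filter.inter_mem (hg.continuousAt.preimage_mem_nhds (hgw ▸ hU))
      (Metric.ball_mem_nhds _ (by linarith))
  · rintro V ⟨V', hV', rfl⟩
    exact ((Metric.isOpen_ball (x := w) (ε := ε/4)).prod (hopen V' hV')).preimage
      continuous_subtype_val
  · rintro A ⟨V₁, hV₁, rfl⟩ B ⟨V₂, hV₂, rfl⟩ hAB
    have hne : V₁ ≠ V₂ := fun h => hAB (by rw [h])
    refine Set.disjoint_left.mpr ?_
    rintro p ⟨-, h1⟩ ⟨-, h2⟩
    exact Set.disjoint_left.mp (hdisj hV₁ hV₂ hne) h1 h2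
  · ext p
    have hp2 : p.1.2 ∈ f ⁻¹' U ↔ g p.1.1 ∈ U := by
      simp [Set.mem_preimage, ← p.2]
    rw [← hunion] at hp2
    constructor
    · rintro ⟨A, ⟨V, hV, rfl⟩, hb, hv⟩
      exact ⟨hp2.mp ⟨V, hV, hv⟩, hb⟩
    · rintro ⟨hgU, hb⟩
      obtain ⟨V, hV, hv⟩ := hp2.mpr hgU
      exact ⟨_, ⟨V, hV, rfl⟩, hb, hv⟩
  · rintro A ⟨V, hV, rfl⟩ a ⟨ha1, ha2⟩ b ⟨hb1, hb2⟩
    have h1 : dist a.1.1 b.1.1 < ε/2 := by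
      have := dist_triangle a.1.1 w b.1.1
      have := dist_comm b.1.1 w
      simp only [Metric.mem_ball] at ha1 hb1
      linarith [dist_comm w b.1.1 ▸ hb1]
    have h2 : dist a.1.2 b.1.2 < ε/2 := hdiam V hV _ ha2 _ hb2
    rw [show ε = Real.sqrt (ε^2) from (Real.sqrt_sq hε.le).symm]
    apply Real.sqrt_lt_sqrt (by positivity)
    nlinarith [dist_nonneg (x := a.1.1) (y := b.1.1),
      dist_nonneg (x := a.1.2) (y := b.1.2)]
end
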